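/- Let M be a loopless matroid on a finite linearly ordered ground set E, B a building set for M, and N_min the unique inclusion-maximal nested set whose NL-labeling is increasing. Then for every inclusion-maximal nested set N with N ≠ N_min, the sequence m(N_min) strictly precedes m(N) in the lexicographic order on sequences of atoms; that is, N_min is the minimum element of the NL-order. -/

import Mathlib

open Set Matroid
open scoped Matroid

variable {α : Type*}

/-- Two sets are incomparable under inclusion. -/
def Incomp (X Y : Set α) : Prop := ¬ X ⊆ Y ∧ ¬ Y ⊆ X

/-- The inclusion-maximal elements of a family of sets. -/
def maxB (B : Set (Set α)) : Set (Set α) := {X ∈ B | ∀ Y ∈ B, X ⊆ Y → X = Y}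

/-- The rank of a set in a matroid: the largest size of an independent subset. -/
noncomputable def mrank (M : Matroid α) (X : Set α) : ℕ :=
  sSup {n : ℕ | ∃ I ⊆ X, M.Indep I ∧ I.ncard = n}

/-- A matroid is loopless if every singleton of the ground set is independent. -/
def MLoopless (M : Matroid α) : Prop := ∀ e ∈ M.E, M.Indep {e}

/-- A matroid is connected if its rank function is not additive over any
separation of the ground set into two nonempty parts. -/
def MConnected (M : Matroid α) : Prop :=
  ∀ A B : Set α, A ∪ B = M.E → Disjoint A B → A.Nonempty → B.Nonempty →
    mrank M A + mrank M B ≠ mrank M M.E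

/-- A building set for a matroid `M`: a set of nonempty flats containing all nonempty
flats whose restriction is connected, and closed under joins of intersecting members. -/
def IsBuildingSet (M : Matroid α) (B : Set (Set α)) : Prop :=
  (∀ X ∈ B, M.IsFlat X ∧ X.Nonempty) ∧
  (∀ X, M.IsFlat X → X.Nonempty → MConnected (M.restrict X) → X ∈ B) ∧
  (∀ X ∈ B, ∀ Y ∈ B, (X ∩ Y).Nonempty → M.closure (X ∪ Y) ∈ B)

/-- A nested set of a building set `B`. -/
def IsNested (M : Matroid α) (B N : Set (Set α)) : Prop :=
  N ⊆ B ∧ maxB B ⊆ N ∧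
  ∀ S : Set (Set α), S ⊆ N → S.Nontrivial → S.Pairwise Incomp →
    M.closure (⋃₀ S) ∉ B

/-- An inclusion-maximal nested set. -/
def IsMaxNested (M : Matroid α) (B N : Set (Set α)) : Prop :=
  IsNested M B N ∧ ∀ N', IsNested M B N' → N ⊆ N' → N' = N

/-- An atom of a matroid: a rank-one flat. -/
def IsAtomFlat (M : Matroid α) (A : Set α) : Prop := M.IsFlat A ∧ mrank M A = 1

/-- Atoms are compared by their least elements. -/
def atomLE [Preorder α] (A A' : Set α) : Prop :=
  ∃ a a', IsLeast A a ∧ IsLeast A' a' ∧ a ≤ a'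

/-- Strict comparison of atoms by their least elements. -/
def atomLT [Preorder α] (A A' : Set α) : Prop :=
  ∃ a a', IsLeast A a ∧ IsLeast A' a' ∧ a < a'

/-- `A` is an admissible label for `X` within the family `S`:
an atom contained in `X` but in no member of `S` properly below `X`. -/
def GoodLabel (M : Matroid α) (S : Set (Set α)) (X A : Set α) : Prop :=
  IsAtomFlat M A ∧ A ⊆ X ∧ ∀ Y ∈ S, Y ⊂ X → ¬ A ⊆ Y

/-- `A` is the label `m_S(X)`: the least admissible label for `X` within `S`. -/
def IsMinLabel [Preorder α] (M : Matroid α) (S : Set (Set α)) (X A : Set α) : Prop :=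
  GoodLabel M S X A ∧ ∀ A', GoodLabel M S X A' → atomLE A A'

/-- `NLListing M N R L` : `L` is the NL-listing of the remaining family `R`
(labels computed with respect to the whole family `N`), obtained by repeatedly
plucking the inclusion-minimal member with least label. -/
inductive NLListing [Preorder α] (M : Matroid α) (N : Set (Set α)) :
    Set (Set α) → List (Set α × Set α) → Prop
  | nil : NLListing M N ∅ []
  | cons {R : Set (Set α)} {X A : Set α} {L : List (Set α × Set α)} :
      X ∈ R →
      (∀ Y ∈ R, Y ⊆ X → Y = X) →
      IsMinLabel M N X A →
      (∀ Y ∈ R, (∀ W ∈ R, W ⊆ Y → W = Y) → ∀ A', IsMinLabel M N Y A' → atomLE A A') →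
      NLListing M N (R \ {X}) L →
      NLListing M N R ((X, A) :: L)

/-- A descent of a list of atoms at position `i`. -/
def HasDescentAt [Preorder α] (L : List (Set α)) (i : ℕ) : Prop :=
  ∃ h : i + 1 < L.length, atomLT (L.get ⟨i + 1, h⟩) (L.get ⟨i, Nat.lt_of_succ_lt h⟩)

/-- The indicator vector of a set. -/
noncomputable def indVec (X : Set α) : α → ℝ := X.indicator 1

/-- `v` is the vertex of the nested set `N` for the weight vector `c`. -/
def IsVertex (M : Matroid α) (B : Set (Set α)) (c : Set α → ℝ) (N : Set (Set α))
    (v : α → ℝ) : Prop :=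
  (∀ X ∈ N, ∑ᶠ a ∈ X, v a = c X) ∧
  ∃ lam mu : Set α → ℝ,
    (∀ X ∈ N \ maxB B, 0 < lam X) ∧
    v = (∑ᶠ X ∈ N \ maxB B, lam X • indVec X) + ∑ᶠ Y ∈ maxB B, mu Y • indVec Y

/-- `c` is cubical: every nested set has a unique vertex. -/
def IsCubical (M : Matroid α) (B : Set (Set α)) (c : Set α → ℝ) : Prop :=
  ∀ N, IsNested M B N → ∃! v, IsVertex M B c N v

/-- Lexicographic comparison of vectors in `ℝ^E`. -/
def lexLt [LinearOrder α] (u v : α → ℝ) : Prop :=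
  ∃ i, u i < v i ∧ ∀ j, j < i → u j = v j

open Classical in
/-- The map `τ_Z`. -/
noncomputable def tau (M : Matroid α) (Z X : Set α) : Set α :=
  if X ⊆ Z then X else M.closure (X ∪ Z) \ Z

/-- `MZ` is the contraction `M ／ Z`. -/
def IsContraction (M MZ : Matroid α) (Z : Set α) : Prop :=
  MZ.E = M.E \ Z ∧
  ∀ I : Set α, MZ.Indep I ↔ I ⊆ M.E \ Z ∧ ∃ J, M.IsBasis J Z ∧ M.Indep (I ∪ J)

/-! ### Basic matroid lemmas -/

lemma Set.Finite.exists_minimal_wrt {ι β : Type*} [PartialOrder β] (f : ι → β) (s : Set ι)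
    (h : s.Finite) (hs : s.Nonempty) : ∃ a ∈ s, ∀ a' ∈ s, f a' ≤ f a → f a = f a' := by
  obtain ⟨a, ha, hmin⟩ := Set.Finite.exists_minimalFor f s h hs
  exact ⟨a, ha, fun a' ha' hle => le_antisymm (hmin ha' hle) hle⟩

lemma Set.Finite.exists_maximal_wrt {ι β : Type*} [PartialOrder β] (f : ι → β) (s : Set ι)
    (h : s.Finite) (hs : s.Nonempty) : ∃ a ∈ s, ∀ a' ∈ s, f a ≤ f a' → f a = f a' := by
  obtain ⟨a, ha, hmax⟩ := Set.Finite.exists_maximalFor f s h hs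
  exact ⟨a, ha, fun a' ha' hle => le_antisymm hle (hmax ha' hle)⟩

lemma closure_flat' (M : Matroid α) (X : Set α) : M.IsFlat (M.closure X) := by
  rw [Matroid.closure_def]
  have hne : Nonempty {F // M.IsFlat F ∧ X ∩ M.E ⊆ F} :=
    ⟨⟨M.E, M.ground_isFlat, inter_subset_right⟩⟩
  have h := Matroid.IsFlat.iInter (M := M)
    (Fs := fun F : {F // M.IsFlat F ∧ X ∩ M.E ⊆ F} => F.1) (fun F => F.2.1)
  convert h using 1
  rw [sInter_eq_iInter]
  rfl

section Fin
variable [Fintype α]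

lemma mrank_set_nonempty (M : Matroid α) (X : Set α) :
    {n : ℕ | ∃ I ⊆ X, M.Indep I ∧ I.ncard = n}.Nonempty :=
  ⟨0, ∅, empty_subset _, M.empty_indep, Set.ncard_empty _⟩

lemma mrank_set_bddAbove (M : Matroid α) (X : Set α) :
    BddAbove {n : ℕ | ∃ I ⊆ X, M.Indep I ∧ I.ncard = n} := by
  refine ⟨Fintype.card α, ?_⟩
  rintro n ⟨I, _, _, rfl⟩
  exact le_trans (Set.ncard_le_ncard (subset_univ I) (Set.finite_univ)) (by simp [Set.ncard_univ])

lemma le_mrank (M : Matroid α) {X I : Set α} (hIX : I ⊆ X) (hI : M.Indep I) :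
    I.ncard ≤ mrank M X :=
  le_csSup (mrank_set_bddAbove M X) ⟨I, hIX, hI, rfl⟩

lemma mrank_mono (M : Matroid α) {X Y : Set α} (h : X ⊆ Y) : mrank M X ≤ mrank M Y := by
  apply csSup_le (mrank_set_nonempty M X)
  rintro n ⟨I, hIX, hI, rfl⟩
  exact le_mrank M (hIX.trans h) hI

lemma mrank_exists_eq (M : Matroid α) (X : Set α) :
    ∃ I ⊆ X, M.Indep I ∧ I.ncard = mrank M X := by
  have := Nat.sSup_mem (mrank_set_nonempty M X) (mrank_set_bddAbove M X)
  exact this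

lemma atom_nonempty {M : Matroid α} {A : Set α} (hA : IsAtomFlat M A) : A.Nonempty := by
  obtain ⟨I, hIA, hI, hcard⟩ := mrank_exists_eq M A
  rw [hA.2] at hcard
  obtain ⟨x, hx⟩ := (Set.ncard_eq_one.mp hcard)
  exact ⟨x, hIA (hx ▸ rfl)⟩

lemma atom_eq_closure_single {M : Matroid α} (hM : MLoopless M) {A : Set α}
    (hA : IsAtomFlat M A) {x : α} (hx : x ∈ A) : A = M.closure {x} := by
  have hxE : x ∈ M.E := hA.1.subset_ground hx
  have hsub : M.closure {x} ⊆ A := by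
    have := M.closure_subset_closure (show {x} ⊆ A by simpa)
    rwa [hA.1.closure] at this
  refine subset_antisymm (fun y hy => ?_) hsub
  by_cases hxy : y = x
  · subst hxy; exact M.mem_closure_of_mem' rfl hxE
  have hyE : y ∈ M.E := hA.1.subset_ground hy
  have hIx : M.Indep {x} := hM x hxE
  rw [hIx.mem_closure_iff]
  left
  rw [Matroid.dep_iff]
  refine ⟨fun hind => ?_, by simp [insert_subset_iff, hyE, hxE]⟩
  have h2 : ({y, x} : Set α).ncard = 2 := Set.ncard_pair hxy
  have := le_mrank M (show ({y, x} : Set α) ⊆ A by simp [insert_subset_iff, hy, hx]) hind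
  rw [h2, hA.2] at this
  omega

lemma atom_eq_of_mem_inter {M : Matroid α} (hM : MLoopless M) {A A' : Set α}
    (hA : IsAtomFlat M A) (hA' : IsAtomFlat M A') {x : α} (hx : x ∈ A) (hx' : x ∈ A') :
    A = A' := by
  rw [atom_eq_closure_single hM hA hx, atom_eq_closure_single hM hA' hx']

/-- atom of each element of a flat -/
lemma closure_single_atom {M : Matroid α} (hM : MLoopless M) {x : α} (hx : x ∈ M.E) :
    IsAtomFlat M (M.closure {x}) := by
  refine ⟨closure_flat' M _, le_antisymm ?_ ?_⟩
  · apply csSup_le (mrank_set_nonempty M _)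
    rintro n ⟨I, hIc, hI, rfl⟩
    by_contra h
    push_neg at h
    obtain ⟨y, z, hy, hz, hyz⟩ := (Set.one_lt_ncard_iff (Set.toFinite I)).mp (by omega)
    have hyz' : M.Indep {y, z} := hI.subset (by simp [insert_subset_iff, hy, hz])
    have hyncl : y ∉ M.closure ∅ := by
      intro hc
      have h0 : ({y} : Set α) \ {y} = ∅ := by simp
      exact (hM y (hI.subset_ground hy)).notMem_closure_diff_of_mem rfl (by rw [h0]; exact hc)
    have hex : x ∈ M.closure {y} := by
      have : y ∈ M.closure (insert x ∅) \ M.closure ∅ := ⟨by simpa using hIc hy, hyncl⟩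
      simpa using (Matroid.closure_exchange this).1
    have hzy : z ∈ M.closure {y} := by
      have h1 : M.closure {x} ⊆ M.closure {y} := by
        have := M.closure_subset_closure (show ({x} : Set α) ⊆ M.closure {y} by simpa)
        rwa [M.closure_closure] at this
      exact h1 (hIc hz)
    have hdiff : ({y, z} : Set α) \ {z} = {y} := by
      ext w; simp only [mem_diff, mem_insert_iff, mem_singleton_iff]
      constructor
      · rintro ⟨h1 | h1, h2⟩ <;> tauto
      · rintro rfl; exact ⟨Or.inl rfl, hyz⟩
    exact hyz'.notMem_closure_diff_of_mem (show z ∈ ({y, z} : Set α) by simp) (by rw [hdiff]; exact hzy)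
  · have : ({x} : Set α).ncard ≤ mrank M (M.closure {x}) :=
      le_mrank M (M.subset_closure {x} (by simpa)) (hM x hx)
    simpa using this

end Fin

section Fin2
variable [Fintype α] {M : Matroid α} {B : Set (Set α)}

lemma mem_B_flat (hB : IsBuildingSet M B) {X : Set α} (hX : X ∈ B) : M.IsFlat X :=
  (hB.1 X hX).1

lemma mem_B_nonempty (hB : IsBuildingSet M B) {X : Set α} (hX : X ∈ B) : X.Nonempty :=
  (hB.1 X hX).2

lemma mem_B_subset_ground (hB : IsBuildingSet M B) {X : Set α} (hX : X ∈ B) : X ⊆ M.E :=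
  (mem_B_flat hB hX).subset_ground

lemma mrank_restrict_eq (M : Matroid α) {R S : Set α} (hSR : S ⊆ R) :
    mrank (M.restrict R) S = mrank M S := by
  unfold mrank
  congr 1
  ext n
  constructor
  · rintro ⟨I, hIS, hI, rfl⟩
    exact ⟨I, hIS, ((M.restrict_indep_iff).1 hI).1, rfl⟩
  · rintro ⟨I, hIS, hI, rfl⟩
    exact ⟨I, hIS, (M.restrict_indep_iff).2 ⟨hI, hIS.trans hSR⟩, rfl⟩

lemma one_le_mrank (hM : MLoopless M) {S : Set α} (hS : S.Nonempty) (hSE : S ⊆ M.E) :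
    1 ≤ mrank M S := by
  obtain ⟨x, hx⟩ := hS
  have := le_mrank M (show ({x} : Set α) ⊆ S by simpa) (hM x (hSE hx))
  simpa using this

/-- Every atom flat belongs to any building set. -/
lemma atom_mem_building (hM : MLoopless M) (hB : IsBuildingSet M B) {A : Set α}
    (hA : IsAtomFlat M A) : A ∈ B := by
  refine hB.2.1 A hA.1 (atom_nonempty hA) ?_
  intro U V hUV hdisj hU hV
  have hUA : U ⊆ A := by
    rw [show (M.restrict A).E = A from rfl] at hUV
    exact hUV ▸ subset_union_left
  have hVA : V ⊆ A := by
    rw [show (M.restrict A).E = A from rfl] at hUV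
    exact hUV ▸ subset_union_right
  have hAE : A ⊆ M.E := hA.1.subset_ground
  have hgr : (M.restrict A).E = A := rfl
  rw [mrank_restrict_eq M hUA, mrank_restrict_eq M hVA, hgr,
    mrank_restrict_eq M (subset_refl A)]
  have h1 : 1 ≤ mrank M U := one_le_mrank hM hU (hUA.trans hAE)
  have h2 : 1 ≤ mrank M V := one_le_mrank hM hV (hVA.trans hAE)
  rw [hA.2]
  omega

/-- Laminarity: intersecting members of a nested set are comparable. -/
lemma nested_laminar (hB : IsBuildingSet M B) {N : Set (Set α)} (hN : IsNested M B N)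
    {X Y : Set α} (hX : X ∈ N) (hY : Y ∈ N) (hXY : (X ∩ Y).Nonempty) :
    X ⊆ Y ∨ Y ⊆ X := by
  by_contra h
  push_neg at h
  obtain ⟨h1, h2⟩ := h
  have hne : X ≠ Y := fun he => h1 (he ▸ subset_refl X)
  have hS : ({X, Y} : Set (Set α)) ⊆ N := by
    intro Z hZ; rcases hZ with rfl | rfl
    · exact hX
    · exact hY
  have hnt : ({X, Y} : Set (Set α)).Nontrivial := ⟨X, by simp, Y, by simp, hne⟩
  have hpw : ({X, Y} : Set (Set α)).Pairwise Incomp := by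
    intro Z₁ hZ₁ Z₂ hZ₂ hne'
    rcases hZ₁ with rfl | rfl <;> rcases hZ₂ with rfl | rfl
    · exact absurd rfl hne'
    · exact ⟨h1, h2⟩
    · exact ⟨h2, h1⟩
    · exact absurd rfl hne'
  have := hN.2.2 {X, Y} hS hnt hpw
  rw [Set.sUnion_pair] at this
  exact this (hB.2.2 X (hN.1 hX) Y (hN.1 hY) hXY)

/-- Minimal member of a nested set containing a given nonempty set. -/
lemma exists_min_containing (hB : IsBuildingSet M B) {N : Set (Set α)} (hN : IsNested M B N)
    {A : Set α} (hA : A.Nonempty) (hex : ∃ Z ∈ N, A ⊆ Z) :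
    ∃ Y ∈ N, A ⊆ Y ∧ ∀ Z ∈ N, A ⊆ Z → Y ⊆ Z := by
  classical
  set fam : Set (Set α) := {Z ∈ N | A ⊆ Z} with hfam
  have hfin : fam.Finite := Set.toFinite fam
  have hne : fam.Nonempty := by obtain ⟨Z, hZ, hAZ⟩ := hex; exact ⟨Z, hZ, hAZ⟩
  obtain ⟨Y, hY, hmin⟩ := hfin.exists_minimal_wrt id fam hne
  refine ⟨Y, hY.1, hY.2, fun Z hZ hAZ => ?_⟩
  have hcomp := nested_laminar hB hN hY.1 hZ ⟨hA.some, hY.2 hA.some_mem, hAZ hA.some_mem⟩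
  rcases hcomp with h | h
  · exact h
  · have h2 : id Y = id Z := hmin Z ⟨hZ, hAZ⟩ h
    simp only [id] at h2
    exact h2.subset

/-- Every member of B lies below a maximal member. -/
lemma exists_maxB_above (hB : IsBuildingSet M B) {X : Set α} (hX : X ∈ B) :
    ∃ Y ∈ maxB B, X ⊆ Y := by
  classical
  set fam : Set (Set α) := {Z ∈ B | X ⊆ Z} with hfam
  obtain ⟨Y, hY, hmax⟩ := (Set.toFinite fam).exists_maximal_wrt id fam ⟨X, hX, subset_refl X⟩
  refine ⟨Y, ⟨hY.1, fun W hW hYW => ?_⟩, hY.2⟩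
  exact hmax W ⟨hW, hY.2.trans hYW⟩ hYW

end Fin2

section Fin3
variable [Fintype α] {M : Matroid α} {B : Set (Set α)} {N : Set (Set α)}

lemma sUnion_subset_ground (hB : IsBuildingSet M B) {S : Set (Set α)} (hS : S ⊆ B) :
    ⋃₀ S ⊆ M.E := by
  intro x hx
  obtain ⟨Z, hZ, hxZ⟩ := hx
  exact mem_B_subset_ground hB (hS hZ) hxZ

/-- Obstruction lemma: if `R ∈ B` sits strictly inside `X ∈ N` but is not in the
maximal nested set `N`, there is an antichain of members of `N` strictly below `X`,
all incomparable with `R`, whose join with `R` lies in `B`. -/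
lemma obstruct (hB : IsBuildingSet M B) (hN : IsMaxNested M B N) {X R : Set α}
    (hX : X ∈ N) (hR : R ∈ B) (hRX : R ⊆ X) (hRN : R ∉ N) :
    ∃ S₀ : Set (Set α), S₀ ⊆ N ∧ S₀.Nonempty ∧ (∀ Z ∈ S₀, Z ⊂ X) ∧
      (∀ Z ∈ S₀, Incomp Z R) ∧ S₀.Pairwise Incomp ∧ M.closure (R ∪ ⋃₀ S₀) ∈ B := by
  classical
  -- N ∪ {R} is not nested
  have hnot : ¬ IsNested M B (insert R N) := by
    intro hc
    exact hRN (((hN.2 (insert R N) hc (subset_insert R N)) ▸ mem_insert R N : R ∈ N))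
  have hsub : insert R N ⊆ B := insert_subset hR hN.1.1
  have hmaxb : maxB B ⊆ insert R N := hN.1.2.1.trans (subset_insert R N)
  -- extract failing antichain
  rw [IsNested] at hnot
  push_neg at hnot
  obtain ⟨S, hSsub, hSnt, hSpw, hScl⟩ := hnot hsub hmaxb
  have hRS : R ∈ S := by
    by_contra hRS
    have hSN : S ⊆ N := fun Z hZ => by
      rcases hSsub hZ with rfl | h
      · exact absurd hZ hRS
      · exact h
    exact hN.1.2.2 S hSN hSnt hSpw hScl
  set S₀ : Set (Set α) := S \ {R} with hS₀def
  have hS₀N : S₀ ⊆ N := by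
    rintro Z ⟨hZS, hZR⟩
    rcases hSsub hZS with rfl | h
    · exact absurd rfl hZR
    · exact h
  have hS₀ne : S₀.Nonempty := by
    obtain ⟨a, ha, b, hb, hab⟩ := hSnt
    by_cases haR : a = R
    · exact ⟨b, hb, by simp [haR ▸ hab.symm]⟩
    · exact ⟨a, ha, by simp [haR]⟩
  have hSeq : ⋃₀ S = R ∪ ⋃₀ S₀ := by
    conv_lhs => rw [show S = insert R S₀ by
      rw [hS₀def, Set.insert_diff_singleton, Set.insert_eq_of_mem hRS]]
    rw [Set.sUnion_insert]
  have hinc : ∀ Z ∈ S₀, Incomp Z R := by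
    rintro Z ⟨hZS, hZR⟩
    exact hSpw hZS hRS (by simpa using hZR)
  have hpw₀ : S₀.Pairwise Incomp := hSpw.mono diff_subset
  -- each member of S₀ is ⊂ X or disjoint from X
  have hdich : ∀ Z ∈ S₀, Z ⊂ X ∨ Z ∩ X = ∅ := by
    intro Z hZ
    by_cases hZX : (Z ∩ X).Nonempty
    · left
      rcases nested_laminar hB hN.1 (hS₀N hZ) hX hZX with h | h
      · refine ssubset_of_subset_of_ne h (fun he => ?_)
        exact (hinc Z hZ).2 (he ▸ hRX)
      · exact absurd (hRX.trans h) (hinc Z hZ).2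
    · right; exact not_nonempty_iff_eq_empty.mp hZX
  -- no member of S₀ is disjoint from X
  have hnodisj : ∀ Z ∈ S₀, Z ⊂ X := by
    by_contra hcon
    push_neg at hcon
    obtain ⟨Z₀, hZ₀, hZ₀X⟩ := hcon
    have hZ₀disj : Z₀ ∩ X = ∅ := (hdich Z₀ hZ₀).resolve_left hZ₀X
    set Sb : Set (Set α) := {Z ∈ S₀ | Z ∩ X = ∅} with hSbdef
    have hSbne : Sb.Nonempty := ⟨Z₀, hZ₀, hZ₀disj⟩
    -- V = cl(⋃₀ S) ∈ B meets X
    have hV : M.closure (⋃₀ S) ∈ B := hScl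
    have hRV : R ⊆ M.closure (⋃₀ S) := by
      refine subset_trans ?_ (M.subset_closure _ (sUnion_subset_ground hB (hSsub.trans hsub)))
      rw [hSeq]; exact subset_union_left
    have hVXne : (M.closure (⋃₀ S) ∩ X).Nonempty := by
      obtain ⟨r, hr⟩ := mem_B_nonempty hB hR
      exact ⟨r, hRV hr, hRX hr⟩
    have hV₂ : M.closure (M.closure (⋃₀ S) ∪ X) ∈ B :=
      hB.2.2 _ hV X (hN.1.1 hX) hVXne
    -- simplify V₂
    have hunion : ⋃₀ S ∪ X = X ∪ ⋃₀ Sb := by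
      apply subset_antisymm
      · rintro x (hx | hx)
        · rw [hSeq] at hx
          rcases hx with hx | hx
          · exact Or.inl (hRX hx)
          · obtain ⟨Z, hZ, hxZ⟩ := hx
            rcases hdich Z hZ with h | h
            · exact Or.inl (h.1 hxZ)
            · exact Or.inr ⟨Z, ⟨hZ, h⟩, hxZ⟩
        · exact Or.inl hx
      · rintro x (hx | hx)
        · exact Or.inr hx
        · obtain ⟨Z, hZ, hxZ⟩ := hx
          exact Or.inl (by rw [hSeq]; exact Or.inr ⟨Z, hZ.1, hxZ⟩)
    have hV₂eq : M.closure (M.closure (⋃₀ S) ∪ X) = M.closure (X ∪ ⋃₀ Sb) := by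
      rw [M.closure_union_closure_left_eq, hunion]
    -- antichain insert X Sb contradicts nestedness of N
    have hXSb : X ∉ Sb := by
      rintro ⟨_, hd⟩
      obtain ⟨x, hx⟩ := mem_B_nonempty hB (hN.1.1 hX)
      exact absurd hd (by rw [Set.inter_self]; exact Set.nonempty_iff_ne_empty.1 ⟨x, hx⟩)
    have hT : insert X Sb ⊆ N := insert_subset hX ((sep_subset _ _).trans hS₀N)
    have hTnt : (insert X Sb).Nontrivial := by
      obtain ⟨Z, hZ⟩ := hSbne
      exact ⟨X, mem_insert _ _, Z, mem_insert_of_mem _ hZ, fun he => hXSb (he ▸ hZ)⟩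
    have hTpw : (insert X Sb).Pairwise Incomp := by
      intro Z₁ hZ₁ Z₂ hZ₂ hne'
      have hInc : ∀ W ∈ Sb, Incomp X W := by
        intro W hW
        have hWne := mem_B_nonempty hB (hN.1.1 (hS₀N hW.1))
        have hXne := mem_B_nonempty hB (hN.1.1 hX)
        constructor
        · intro hs
          obtain ⟨x, hx⟩ := hXne
          exact absurd hW.2 (Set.nonempty_iff_ne_empty.1 ⟨x, hs hx, hx⟩)
        · intro hs
          obtain ⟨w, hw⟩ := hWne
          exact absurd hW.2 (Set.nonempty_iff_ne_empty.1 ⟨w, hw, hs hw⟩)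
      rcases hZ₁ with rfl | h₁ <;> rcases hZ₂ with rfl | h₂
      · exact absurd rfl hne'
      · exact hInc Z₂ h₂
      · exact ⟨(hInc Z₁ h₁).2, (hInc Z₁ h₁).1⟩
      · exact hpw₀ h₁.1 h₂.1 hne'
    have := hN.1.2.2 (insert X Sb) hT hTnt hTpw
    rw [Set.sUnion_insert] at this
    exact this (hV₂eq ▸ hV₂)
  refine ⟨S₀, hS₀N, hS₀ne, hnodisj, hinc, hpw₀, ?_⟩
  rw [← hSeq]; exact hScl

end Fin3

section Fin4
variable [Fintype α] {M : Matroid α} {B : Set (Set α)} {N : Set (Set α)}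

/-- The closure formula: a member of a maximal nested set is spanned by any good
label together with its proper sub-members. -/
lemma closure_label_sub (hM : MLoopless M) (hB : IsBuildingSet M B)
    (hN : IsMaxNested M B N) {X A : Set α} (hX : X ∈ N) (hA : GoodLabel M N X A) :
    M.closure (A ∪ ⋃₀ {Z ∈ N | Z ⊂ X}) = X := by
  classical
  set sub : Set (Set α) := {Z ∈ N | Z ⊂ X} with hsubdef
  have hXflat : M.IsFlat X := mem_B_flat hB (hN.1.1 hX)
  have hAX : A ⊆ X := hA.2.1
  have hsubX : ⋃₀ sub ⊆ X := by
    rintro x ⟨Z, hZ, hxZ⟩; exact hZ.2.1 hxZ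
  have hgen_sub_E : A ∪ ⋃₀ sub ⊆ M.E := (union_subset hAX hsubX).trans hXflat.subset_ground
  set X₀ : Set α := M.closure (A ∪ ⋃₀ sub) with hX₀def
  have hX₀X : X₀ ⊆ X := by
    have := M.closure_subset_closure (union_subset hAX hsubX)
    rwa [hXflat.closure] at this
  have hX₀flat : M.IsFlat X₀ := closure_flat' M _
  have hAX₀ : A ⊆ X₀ := (subset_union_left).trans (M.subset_closure _ hgen_sub_E)
  have hsubX₀ : ⋃₀ sub ⊆ X₀ := (subset_union_right).trans (M.subset_closure _ hgen_sub_E)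
  by_contra hne
  have hX₀ssX : X₀ ⊂ X := ssubset_of_subset_of_ne hX₀X hne
  -- the family P of building-set members between A and X₀ has no maximal element
  set P : Set (Set α) := {R | R ∈ B ∧ A ⊆ R ∧ R ⊆ X₀} with hPdef
  have hPA : A ∈ P := ⟨atom_mem_building hM hB hA.1, subset_refl A, hAX₀⟩
  obtain ⟨R, hRP, hRmax⟩ := (Set.toFinite P).exists_maximal_wrt id P ⟨A, hPA⟩
  have hRN : R ∉ N := by
    intro hRN
    refine hA.2.2 R hRN ?_ hRP.2.1
    exact lt_of_le_of_lt hRP.2.2 hX₀ssX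
  -- obstruction gives a strictly larger member of P
  obtain ⟨S₀, hS₀N, hS₀ne, hS₀X, hS₀inc, _, hS₀cl⟩ :=
    obstruct hB hN hX hRP.1 (hRP.2.2.trans hX₀X) hRN
  set R' : Set α := M.closure (R ∪ ⋃₀ S₀) with hR'def
  have hRE : R ∪ ⋃₀ S₀ ⊆ M.E := by
    refine union_subset (mem_B_subset_ground hB hRP.1) ?_
    exact sUnion_subset_ground hB (hS₀N.trans hN.1.1)
  have hgenX₀ : R ∪ ⋃₀ S₀ ⊆ X₀ := by
    refine union_subset hRP.2.2 ?_
    rintro x ⟨Z, hZ, hxZ⟩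
    exact hsubX₀ ⟨Z, ⟨hS₀N hZ, hS₀X Z hZ⟩, hxZ⟩
  have hRR' : R ⊆ R' := (subset_union_left).trans (M.subset_closure _ hRE)
  have hR'P : R' ∈ P := by
    refine ⟨hS₀cl, hRP.2.1.trans hRR', ?_⟩
    have := M.closure_subset_closure hgenX₀
    rwa [hX₀flat.closure] at this
  have hReq : id R = id R' := hRmax R' hR'P hRR'
  simp only [id] at hReq
  obtain ⟨Z₀, hZ₀⟩ := hS₀ne
  refine (hS₀inc Z₀ hZ₀).1 ?_
  rw [hReq]
  exact subset_trans (by exact fun x hx => ⟨Z₀, hZ₀, hx⟩ : Z₀ ⊆ ⋃₀ S₀)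
    ((subset_union_right).trans (M.subset_closure _ hRE))

end Fin4

section Fin5
variable [Fintype α] {M : Matroid α} {B : Set (Set α)}

/-- One direction of the flat-uniqueness lemma. -/
lemma label_flat_subset (hM : MLoopless M) (hB : IsBuildingSet M B)
    {F G : Set (Set α)} (hF : IsMaxNested M B F) (hG : IsMaxNested M B G)
    {X X' A : Set α} (hX : X ∈ F) (hX' : X' ∈ G)
    (hgF : GoodLabel M F X A) (hgG : GoodLabel M G X' A)
    (hsubF : ∀ Z ∈ F, Z ⊂ X → Z ∈ G) : X ⊆ X' := by
  classical
  have hAne : A.Nonempty := atom_nonempty hgF.1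
  set D : Set (Set α) := {Z ∈ F | Z ⊂ X ∧ ¬ Z ⊆ X'} with hDdef
  -- members of D are disjoint from X'
  have hDdisj : ∀ Z ∈ D, Z ∩ X' = ∅ := by
    rintro Z ⟨hZF, hZX, hZX'⟩
    by_contra hne
    have hne' : (Z ∩ X').Nonempty := Set.nonempty_iff_ne_empty.2 hne
    rcases nested_laminar hB hG.1 (hsubF Z hZF hZX) hX' hne' with h | h
    · exact hZX' h
    · exact hgF.2.2 Z hZF hZX (hgG.2.1.trans h)
  by_cases hD : D.Nonempty
  · -- contradiction via an antichain in G
    exfalso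
    -- maximal elements of D
    set M₂ : Set (Set α) := {W ∈ D | ∀ W' ∈ D, W ⊆ W' → W = W'} with hM₂def
    have hM₂ne : M₂.Nonempty := by
      obtain ⟨W, hW, hmax⟩ := (Set.toFinite D).exists_maximal_wrt id D hD
      exact ⟨W, hW, fun W' hW' hs => hmax W' hW' hs⟩
    have hDM₂ : ∀ Z ∈ D, ∃ W ∈ M₂, Z ⊆ W := by
      intro Z hZ
      obtain ⟨W, hW, hmax⟩ := (Set.toFinite {W ∈ D | Z ⊆ W}).exists_maximal_wrt id
        {W ∈ D | Z ⊆ W} ⟨Z, hZ, subset_refl Z⟩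
      refine ⟨W, ⟨hW.1, fun W' hW' hs => ?_⟩, hW.2⟩
      exact hmax W' ⟨hW', hW.2.trans hs⟩ hs
    have hM₂G : M₂ ⊆ G := fun W hW => hsubF W hW.1.1 hW.1.2.1
    -- the antichain
    set T : Set (Set α) := insert X' M₂ with hTdef
    have hX'M₂ : X' ∉ M₂ := by
      intro hc
      have := hDdisj X' hc.1
      rw [Set.inter_self] at this
      exact absurd this (Set.nonempty_iff_ne_empty.1 (mem_B_nonempty hB (hG.1.1 hX')))
    have hTG : T ⊆ G := insert_subset hX' hM₂G
    have hTnt : T.Nontrivial := by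
      obtain ⟨W, hW⟩ := hM₂ne
      exact ⟨X', mem_insert _ _, W, mem_insert_of_mem _ hW, fun he => hX'M₂ (he ▸ hW)⟩
    have hincXW : ∀ W ∈ M₂, Incomp X' W := by
      intro W hW
      have hd := hDdisj W hW.1
      have hWne := mem_B_nonempty hB (hF.1.1 hW.1.1)
      have hX'ne := mem_B_nonempty hB (hG.1.1 hX')
      constructor
      · intro hs
        obtain ⟨x, hx⟩ := hX'ne
        exact absurd hd (Set.nonempty_iff_ne_empty.1 ⟨x, hs hx, hx⟩)
      · intro hs
        obtain ⟨w, hw⟩ := hWne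
        exact absurd hd (Set.nonempty_iff_ne_empty.1 ⟨w, hw, hs hw⟩)
    have hTpw : T.Pairwise Incomp := by
      intro Z₁ hZ₁ Z₂ hZ₂ hne'
      rcases hZ₁ with rfl | h₁ <;> rcases hZ₂ with rfl | h₂
      · exact absurd rfl hne'
      · exact hincXW Z₂ h₂
      · exact ⟨(hincXW Z₁ h₁).2, (hincXW Z₁ h₁).1⟩
      · -- two distinct maximal elements of D are incomparable
        constructor
        · intro hs; exact hne' (h₁.2 Z₂ h₂.1 hs)
        · intro hs; exact hne' ((h₂.2 Z₁ h₁.1 hs).symm)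
    -- compute the join
    have hXeq := closure_label_sub hM hB hF hX hgF
    have hsubE : A ∪ ⋃₀ {Z ∈ F | Z ⊂ X} ⊆ M.E := by
      refine union_subset (hgF.2.1.trans (mem_B_subset_ground hB (hF.1.1 hX))) ?_
      rintro x ⟨Z, hZ, hxZ⟩
      exact mem_B_subset_ground hB (hF.1.1 hZ.1) hxZ
    have hTE : X' ∪ ⋃₀ M₂ ⊆ M.E := by
      refine union_subset (mem_B_subset_ground hB (hG.1.1 hX')) ?_
      rintro x ⟨Z, hZ, hxZ⟩
      exact mem_B_subset_ground hB (hF.1.1 hZ.1.1) hxZ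
    have hXsubcl : X ⊆ M.closure (X' ∪ ⋃₀ M₂) := by
      rw [← hXeq]
      refine subset_trans (M.closure_subset_closure ?_) (M.closure_closure _).subset
      rintro x (hx | hx)
      · exact (M.subset_closure _ hTE) (Or.inl (hgG.2.1 hx))
      · obtain ⟨Z, hZ, hxZ⟩ := hx
        by_cases hZX' : Z ⊆ X'
        · exact (M.subset_closure _ hTE) (Or.inl (hZX' hxZ))
        · obtain ⟨W, hW, hZW⟩ := hDM₂ Z ⟨hZ.1, hZ.2, hZX'⟩
          exact (M.subset_closure _ hTE) (Or.inr ⟨W, hW, hZW hxZ⟩)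
    have hjoin : M.closure (⋃₀ T) = M.closure (X ∪ X') := by
      rw [hTdef, Set.sUnion_insert]
      apply subset_antisymm
      · apply M.closure_subset_closure
        rintro x (hx | hx)
        · exact Or.inr hx
        · obtain ⟨Z, hZ, hxZ⟩ := hx
          exact Or.inl (hZ.1.2.1.1 hxZ)
      · refine subset_trans (M.closure_subset_closure ?_) (M.closure_closure _).subset
        rintro x (hx | hx)
        · exact hXsubcl hx
        · exact (M.subset_closure _ hTE) (Or.inl hx)
    have hjoinB : M.closure (X ∪ X') ∈ B := by
      refine hB.2.2 X (hF.1.1 hX) X' (hG.1.1 hX') ?_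
      exact ⟨hAne.some, hgF.2.1 hAne.some_mem, hgG.2.1 hAne.some_mem⟩
    exact hG.1.2.2 T hTG hTnt hTpw (hjoin ▸ hjoinB)
  · -- D empty: all sub-members are inside X', so X ⊆ X'
    rw [← closure_label_sub hM hB hF hX hgF]
    have hX'flat : M.IsFlat X' := mem_B_flat hB (hG.1.1 hX')
    have : A ∪ ⋃₀ {Z ∈ F | Z ⊂ X} ⊆ X' := by
      refine union_subset hgG.2.1 ?_
      rintro x ⟨Z, hZ, hxZ⟩
      by_cases hZX' : Z ⊆ X'
      · exact hZX' hxZ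
      · exact absurd ⟨hZ.1, hZ.2, hZX'⟩ (fun hc => hD ⟨Z, hc⟩)
    have := M.closure_subset_closure this
    rwa [hX'flat.closure] at this

/-- Equal good labels with sub-members exchanged force equal flats. -/
lemma label_flat_unique (hM : MLoopless M) (hB : IsBuildingSet M B)
    {F G : Set (Set α)} (hF : IsMaxNested M B F) (hG : IsMaxNested M B G)
    {X X' A : Set α} (hX : X ∈ F) (hX' : X' ∈ G)
    (hgF : GoodLabel M F X A) (hgG : GoodLabel M G X' A)
    (hsubF : ∀ Z ∈ F, Z ⊂ X → Z ∈ G) (hsubG : ∀ Z ∈ G, Z ⊂ X' → Z ∈ F) : X = X' :=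
  subset_antisymm (label_flat_subset hM hB hF hG hX hX' hgF hgG hsubF)
    (label_flat_subset hM hB hG hF hX' hX hgG hgF hsubG)

end Fin5

section Ord
variable [Fintype α] [LinearOrder α] {M : Matroid α}

lemma atom_least {A : Set α} (hA : IsAtomFlat M A) : ∃ a, IsLeast A a := by
  obtain ⟨a, ha, hmin⟩ := Set.exists_min_image A id (Set.toFinite A) (atom_nonempty hA)
  exact ⟨a, ha, fun b hb => hmin b hb⟩

lemma atomLE_refl {A : Set α} (h : ∃ a, IsLeast A a) : atomLE A A := by
  obtain ⟨a, ha⟩ := h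
  exact ⟨a, a, ha, ha, le_refl a⟩

lemma atomLE_trans {A B C : Set α} (h1 : atomLE A B) (h2 : atomLE B C) : atomLE A C := by
  obtain ⟨a, b, ha, hb, hab⟩ := h1
  obtain ⟨b', c, hb', hc, hbc⟩ := h2
  exact ⟨a, c, ha, hc, le_trans hab ((hb.unique hb') ▸ hbc)⟩

lemma atomLE_atomLT_absurd {A B : Set α} (h1 : atomLE A B) (h2 : atomLT B A) : False := by
  obtain ⟨a, b, ha, hb, hab⟩ := h1
  obtain ⟨b', a', hb', ha', hba⟩ := h2
  have e1 : b' = b := hb'.unique hb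
  have e2 : a' = a := ha'.unique ha
  rw [e1, e2] at hba
  exact absurd hab (not_le.2 hba)

lemma atom_trichotomy (hM : MLoopless M) {A A' : Set α}
    (hA : IsAtomFlat M A) (hA' : IsAtomFlat M A') :
    atomLT A A' ∨ A = A' ∨ atomLT A' A := by
  obtain ⟨a, ha⟩ := atom_least hA
  obtain ⟨a', ha'⟩ := atom_least hA'
  rcases lt_trichotomy a a' with h | h | h
  · exact Or.inl ⟨a, a', ha, ha', h⟩
  · exact Or.inr (Or.inl (atom_eq_of_mem_inter hM hA hA' ha.1 (h ▸ ha'.1)))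
  · exact Or.inr (Or.inr ⟨a', a, ha', ha, h⟩)

lemma atomLE_of_atomLT {A A' : Set α} (h : atomLT A A') : atomLE A A' := by
  obtain ⟨a, a', ha, ha', hlt⟩ := h
  exact ⟨a, a', ha, ha', hlt.le⟩

lemma chain'_head_le {l : List (Set α)} {A : Set α}
    (hch : List.Chain' atomLE (A :: l)) (hA : ∃ a, IsLeast A a) :
    ∀ B ∈ A :: l, atomLE A B := by
  induction l generalizing A with
  | nil =>
    intro B hB
    rw [List.mem_singleton] at hB
    subst hB
    exact atomLE_refl hA
  | cons C l ih =>
    intro B hB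
    rcases List.mem_cons.1 hB with h | hB'
    · subst h; exact atomLE_refl hA
    · have h1 : atomLE A C := (List.isChain_cons_cons.1 hch).1
      obtain ⟨a, c, _, hc, _⟩ := id h1
      exact atomLE_trans h1 (ih (List.isChain_cons_cons.1 hch).2 ⟨c, hc⟩ B hB')

end Ord


section Listing
variable [LinearOrder α] {M : Matroid α} {S : Set (Set α)}

lemma nllisting_pairs {R : Set (Set α)} {P : List (Set α × Set α)}
    (h : NLListing M S R P) : ∀ p ∈ P, p.1 ∈ R ∧ IsMinLabel M S p.1 p.2 := by
  induction h with
  | nil => intro p hp; simp at hp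
  | cons hX hmin hlab hgl hrec ih =>
    intro p hp
    rcases List.mem_cons.1 hp with rfl | hp'
    · exact ⟨hX, hlab⟩
    · obtain ⟨h1, h2⟩ := ih p hp'
      exact ⟨h1.1, h2⟩

lemma nllisting_exists_pair {R : Set (Set α)} {P : List (Set α × Set α)}
    (h : NLListing M S R P) : ∀ Z ∈ R, ∃ A, (Z, A) ∈ P := by
  induction h with
  | nil => intro Z hZ; simp at hZ
  | @cons R X A L hX hmin hlab hgl hrec ih =>
    intro Z hZ
    by_cases hZX : Z = X
    · exact ⟨A, by simp [hZX]⟩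
    · obtain ⟨A', hA'⟩ := ih Z ⟨hZ, hZX⟩
      exact ⟨A', List.mem_cons_of_mem _ hA'⟩

lemma nllisting_nil {P : List (Set α × Set α)} (h : NLListing M S ∅ P) : P = [] := by
  cases h with
  | nil => rfl
  | cons hX _ _ _ _ => simp at hX

lemma nllisting_empty_of_nil {R : Set (Set α)} (h : NLListing M S R []) : R = ∅ := by
  cases h; rfl

end Listing

section Core
variable [Fintype α] [LinearOrder α] {M : Matroid α} {B : Set (Set α)}

lemma core (hM : MLoopless M) (hB : IsBuildingSet M B) {Nmin N : Set (Set α)}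
    (hNminMax : IsMaxNested M B Nmin) (hNMax : IsMaxNested M B N) (hne : N ≠ Nmin) :
    ∀ (P Q : List (Set α × Set α)) (R R' C : Set (Set α)),
      NLListing M Nmin R P → NLListing M N R' Q →
      (∀ Z, Z ∈ Nmin ↔ Z ∈ C ∨ Z ∈ R) →
      (∀ Z, Z ∈ N ↔ Z ∈ C ∨ Z ∈ R') →
      (∀ Z ∈ C, Z ∉ R') →
      (∀ Z ∈ C, ∀ W ∈ R', ¬ W ⊂ Z) →
      List.Chain' atomLE (P.map Prod.snd) →
      List.Lex atomLT (P.map Prod.snd) (Q.map Prod.snd) := by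
  intro P
  induction P with
  | nil =>
    intro Q R R' C hP hQ hNmin_eq hN_eq hCR' hINV2 hch
    have hR : R = ∅ := nllisting_empty_of_nil hP
    cases Q with
    | nil =>
      have hR' : R' = ∅ := nllisting_empty_of_nil hQ
      exfalso
      apply hne
      ext Z
      rw [hN_eq Z, hNmin_eq Z, hR, hR']
    | cons q Q' =>
      exact List.Lex.nil
  | cons p P' ih =>
    obtain ⟨X, A⟩ := p
    intro Q R R' C hP hQ hNmin_eq hN_eq hCR' hINV2 hch
    cases hP with
    | cons hXR hminP hlabP hglP hrecP =>
    cases Q with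
    | nil =>
      -- N ⊆ Nmin, contradiction with maximality of N
      exfalso
      have hR' : R' = ∅ := nllisting_empty_of_nil hQ
      have hsub : N ⊆ Nmin := by
        intro Z hZ
        rcases (hN_eq Z).1 hZ with h | h
        · exact (hNmin_eq Z).2 (Or.inl h)
        · rw [hR'] at h; simp at h
      exact hne (hNMax.2 Nmin hNminMax.1 hsub).symm
    | cons q Q' =>
      obtain ⟨X', A'⟩ := q
      cases hQ with
      | cons hX'R' hminQ hlabQ hglQ hrecQ =>
      have hXNmin : X ∈ Nmin := (hNmin_eq X).2 (Or.inr hXR)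
      have hX'N : X' ∈ N := (hN_eq X').2 (Or.inr hX'R')
      rcases atom_trichotomy hM hlabP.1.1 hlabQ.1.1 with hLT | hEQ | hGT
      · -- A < A' : immediate lex win
        exact List.Lex.rel hLT
      · -- A = A' : flats coincide, recurse
        have hgoodG : GoodLabel M N X' A := hEQ ▸ hlabQ.1
        have hsubF : ∀ Z ∈ Nmin, Z ⊂ X → Z ∈ N := by
          intro Z hZ hZX
          rcases (hNmin_eq Z).1 hZ with h | h
          · exact (hN_eq Z).2 (Or.inl h)
          · exact absurd (hminP Z h hZX.le) hZX.ne
        have hsubG : ∀ Z ∈ N, Z ⊂ X' → Z ∈ Nmin := by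
          intro Z hZ hZX
          rcases (hN_eq Z).1 hZ with h | h
          · exact (hNmin_eq Z).2 (Or.inl h)
          · exact absurd (hminQ Z h hZX.le) hZX.ne
        have hXX' : X = X' :=
          label_flat_unique hM hB hNminMax hNMax hXNmin hX'N hlabP.1 hgoodG hsubF hsubG
        subst hXX'
        subst hEQ
        refine List.Lex.cons ?_
        refine ih Q' (R \ {X}) (R' \ {X}) (insert X C) hrecP hrecQ ?_ ?_ ?_ ?_ ?_
        · intro Z
          rw [hNmin_eq Z]
          constructor
          · rintro (h | h)
            · exact Or.inl (mem_insert_of_mem _ h)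
            · by_cases hZX : Z = X
              · exact Or.inl (hZX ▸ mem_insert _ _)
              · exact Or.inr ⟨h, hZX⟩
          · rintro (h | h)
            · rcases h with rfl | h
              · exact Or.inr hXR
              · exact Or.inl h
            · exact Or.inr h.1
        · intro Z
          rw [hN_eq Z]
          constructor
          · rintro (h | h)
            · exact Or.inl (mem_insert_of_mem _ h)
            · by_cases hZX : Z = X
              · exact Or.inl (hZX ▸ mem_insert _ _)
              · exact Or.inr ⟨h, hZX⟩
          · rintro (h | h)
            · rcases h with rfl | h
              · exact Or.inr hX'R'
              · exact Or.inl h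
            · exact Or.inr h.1
        · rintro Z hZ ⟨hZR', hZX⟩
          rcases hZ with rfl | hZC
          · exact hZX rfl
          · exact hCR' Z hZC hZR'
        · rintro Z hZ W ⟨hWR', hWX⟩ hWZ
          rcases hZ with rfl | hZC
          · exact hWX (hminQ W hWR' hWZ.le)
          · exact hINV2 Z hZC W hWR' hWZ
        · exact hch.tail
      · -- A' < A : impossible
        exfalso
        have hgoodQ : GoodLabel M N X' A' := hlabQ.1
        have hA'ne : A'.Nonempty := atom_nonempty hgoodQ.1
        obtain ⟨Wmax, hWmaxB, hX'W⟩ := exists_maxB_above hB (hNMax.1.1 hX'N)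
        have hWmaxNmin : Wmax ∈ Nmin := hNminMax.1.2.1 hWmaxB
        obtain ⟨Y, hYNmin, hA'Y, hYmin⟩ := exists_min_containing hB hNminMax.1 hA'ne
          ⟨Wmax, hWmaxNmin, hgoodQ.2.1.trans hX'W⟩
        have hgoodY : GoodLabel M Nmin Y A' :=
          ⟨hgoodQ.1, hA'Y, fun Z hZ hZY hA'Z => hZY.not_ge (hYmin Z hZ hA'Z)⟩
        rcases (hNmin_eq Y).1 hYNmin with hYC | hYR
        · -- Y already listed: X' ⊊ Y contradicts minimality invariant
          have hYN : Y ∈ N := (hN_eq Y).2 (Or.inl hYC)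
          obtain ⟨a', ha'⟩ := hA'ne
          have hX'Y : X' ⊆ Y := by
            rcases nested_laminar hB hNMax.1 hX'N hYN
              ⟨a', hgoodQ.2.1 ha', hA'Y ha'⟩ with h | h
            · exact h
            · by_cases hYX' : Y = X'
              · exact absurd (hYX' ▸ hX'R') (hCR' Y hYC)
              · exact absurd hA'Y (hgoodQ.2.2 Y hYN (ssubset_of_subset_of_ne h hYX'))
          have hX'neY : X' ≠ Y := fun he => hCR' Y hYC (he ▸ hX'R')
          exact hINV2 Y hYC X' hX'R' (ssubset_of_subset_of_ne hX'Y hX'neY)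
        · -- Y still unlisted: its label contradicts increasingness
          obtain ⟨Ay, hAyP⟩ := nllisting_exists_pair
            (NLListing.cons hXR hminP hlabP hglP hrecP) Y hYR
          have hAyMin : IsMinLabel M Nmin Y Ay :=
            (nllisting_pairs (NLListing.cons hXR hminP hlabP hglP hrecP) _ hAyP).2
          have h1 : atomLE Ay A' := hAyMin.2 A' hgoodY
          have h2 : atomLE A Ay := by
            have hmem : Ay ∈ (List.map Prod.snd ((X, A) :: P')) :=
              List.mem_map_of_mem (f := Prod.snd) hAyP
            exact chain'_head_le hch (atom_least hlabP.1.1) Ay hmem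
          exact atomLE_atomLT_absurd (atomLE_trans h2 h1) hGT

end Core

/-- the unique inclusion-maximal nested set with increasing NL-labeling
is the minimum of the NL-order. -/
theorem nl_min_is_lex_minimum {α : Type*} [Fintype α] [LinearOrder α]
    (M : Matroid α) (hM : MLoopless M)
    (B : Set (Set α)) (hB : IsBuildingSet M B)
    (Nmin : Set (Set α)) (hNmin : IsMaxNested M B Nmin)
    (Pmin : List (Set α × Set α)) (hPmin : NLListing M Nmin Nmin Pmin)
    (hinc : ∀ i, ¬ HasDescentAt (Pmin.map Prod.snd) i)
    (huniq : ∀ N P, IsMaxNested M B N → NLListing M N N P →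
      (∀ i, ¬ HasDescentAt (P.map Prod.snd) i) → N = Nmin) :
    ∀ N P, IsMaxNested M B N → N ≠ Nmin → NLListing M N N P →
      List.Lex atomLT (Pmin.map Prod.snd) (P.map Prod.snd) := by
  intro N P hNMax hneq hP
  -- every entry of the label list is an atom
  have hatoms : ∀ A ∈ Pmin.map Prod.snd, IsAtomFlat M A := by
    intro A hA
    obtain ⟨p, hp, rfl⟩ := List.mem_map.1 hA
    exact (nllisting_pairs hPmin p hp).2.1.1
  -- increasingness gives a chain
  have hch : List.Chain' atomLE (Pmin.map Prod.snd) := by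
    rw [show List.Chain' atomLE (Pmin.map Prod.snd) = List.IsChain atomLE (Pmin.map Prod.snd) from rfl, List.isChain_iff_getElem]
    intro i hi
    set L := Pmin.map Prod.snd with hL
    have hlen : i + 1 < L.length := by omega
    have hnd := hinc i
    rw [HasDescentAt] at hnd
    push_neg at hnd
    have hnd' := hnd hlen
    have ha1 : IsAtomFlat M (L.get ⟨i, by omega⟩) := hatoms _ (L.get_mem _)
    have ha2 : IsAtomFlat M (L.get ⟨i + 1, hlen⟩) := hatoms _ (L.get_mem _)
    rcases atom_trichotomy hM ha1 ha2 with h | h | h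
    · exact atomLE_of_atomLT h
    · exact (show atomLE (L.get ⟨i, by omega⟩) (L.get ⟨i + 1, hlen⟩) by rw [← h]; exact atomLE_refl (atom_least ha1))
    · exact absurd h hnd'
  exact core hM hB hNmin hNMax hneq Pmin P Nmin N ∅ hPmin hP
    (fun Z => by simp) (fun Z => by simp) (fun Z hZ => by simp at hZ)
    (fun Z hZ => by simp at hZ) hch
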